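/- arXiv:2511.10366 — 3 statements merged into one kernel-verified Lean document; each statement's English description precedes it below -/
import Mathlib

section
/- If P and Q are product distributions on {0,1}^d with mean vectors p, q ∈ [τ, 1−τ]^d for 0 < τ ≤ 1/2, then the total variation distance satisfies d_TV(P,Q) ≤ ‖p−q‖₂ / √τ. -/
/-- PMF of the product of Bernoulli distributions on {0,1}^d. -/
noncomputable def prodPMF {d : ℕ} (p : Fin d → ℝ) (x : Fin d → Bool) : ℝ :=
  ∏ i, if x i then p i else 1 - p i

/-- Total variation distance between two product Bernoulli distributions on {0,1}^d. -/
noncomputable def tvProd {d : ℕ} (p q : Fin d → ℝ) : ℝ :=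
  (1/2) * ∑ x : Fin d → Bool, |prodPMF p x - prodPMF q x|

/-!
Bound the total variation distance by the Hellinger distance (Le Cam):
`(∑ |P - Q|)² ≤ 4 ∑ (√P - √Q)²`, by Cauchy–Schwarz after factoring
`P - Q = (√P - √Q)(√P + √Q)`. For product measures the affinity `∑ √(P Q)` factors as
`∏ᵢ ∑ √(Pᵢ Qᵢ)`, so the squared Hellinger distance is subadditive over coordinates by
`1 - ∏ cᵢ ≤ ∑ (1 - cᵢ)`. For one Bernoulli coordinate,
`(√a - √b)² = (a - b)² / (√a + √b)² ≤ (a - b)² / (4τ)` once `a, b ≥ τ`.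
-/

open Finset Real

lemma one_sub_prod_le_sum_one_sub {ι : Type*} (s : Finset ι) {f : ι → ℝ}
    (h0 : ∀ i ∈ s, 0 ≤ f i) (h1 : ∀ i ∈ s, f i ≤ 1) :
    1 - ∏ i ∈ s, f i ≤ ∑ i ∈ s, (1 - f i) := by
  induction s using Finset.cons_induction with
  | empty => simp
  | cons a s ha ih =>
    have h0s : ∀ i ∈ s, 0 ≤ f i := fun i hi => h0 i (mem_cons_of_mem hi)
    have h1s : ∀ i ∈ s, f i ≤ 1 := fun i hi => h1 i (mem_cons_of_mem hi)
    have hprod_le_one : ∏ i ∈ s, f i ≤ 1 := prod_le_one h0s h1s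
    rw [prod_cons, sum_cons]
    nlinarith [ih h0s h1s, h0 a (mem_cons_self a s), h1 a (mem_cons_self a s)]

section Hellinger

variable {α : Type*} [Fintype α] {P Q : α → ℝ}

lemma sq_sum_abs_sub_le (hP : ∀ x, 0 ≤ P x) (hQ : ∀ x, 0 ≤ Q x) :
    (∑ x, |P x - Q x|) ^ 2 ≤ 2 * (∑ x, (P x + Q x)) * ∑ x, (√(P x) - √(Q x)) ^ 2 := by
  have hfactor : ∀ x, |P x - Q x| = |√(P x) - √(Q x)| * (√(P x) + √(Q x)) := fun x => by
    rw [← abs_of_nonneg (by positivity : 0 ≤ √(P x) + √(Q x)), ← abs_mul]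
    congr 1
    linear_combination (sq_sqrt (hQ x)) - (sq_sqrt (hP x))
  have hsum_sq : ∀ x, (√(P x) + √(Q x)) ^ 2 ≤ 2 * (P x + Q x) := fun x => by
    nlinarith [sq_sqrt (hP x), sq_sqrt (hQ x), sq_nonneg (√(P x) - √(Q x))]
  calc (∑ x, |P x - Q x|) ^ 2
      = (∑ x, |√(P x) - √(Q x)| * (√(P x) + √(Q x))) ^ 2 := by simp only [hfactor]
    _ ≤ (∑ x, (√(P x) - √(Q x)) ^ 2) * ∑ x, (√(P x) + √(Q x)) ^ 2 := by
        simpa only [sq_abs] using sum_mul_sq_le_sq_mul_sq univ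
          (fun x => |√(P x) - √(Q x)|) (fun x => √(P x) + √(Q x))
    _ ≤ (∑ x, (√(P x) - √(Q x)) ^ 2) * ∑ x, 2 * (P x + Q x) := by
        gcongr with x; exact hsum_sq x
    _ = 2 * (∑ x, (P x + Q x)) * ∑ x, (√(P x) - √(Q x)) ^ 2 := by rw [← mul_sum]; ring

lemma sum_sqrt_sub_sq_eq (hP : ∀ x, 0 ≤ P x) (hQ : ∀ x, 0 ≤ Q x)
    (hP1 : ∑ x, P x = 1) (hQ1 : ∑ x, Q x = 1) :
    ∑ x, (√(P x) - √(Q x)) ^ 2 = 2 - 2 * ∑ x, √(P x * Q x) := by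
  have hexpand : ∀ x, (√(P x) - √(Q x)) ^ 2 = P x + Q x - 2 * √(P x * Q x) := fun x => by
    rw [sqrt_mul (hP x), sub_sq, sq_sqrt (hP x), sq_sqrt (hQ x)]; ring
  simp only [hexpand, sum_sub_distrib, sum_add_distrib, ← mul_sum, hP1, hQ1]
  ring

end Hellinger

section Product

variable {ι β : Type*} [Fintype ι] [DecidableEq ι] [Fintype β] {P Q : ι → β → ℝ}

lemma sum_prod_eq_one (hP1 : ∀ i, ∑ b, P i b = 1) :
    ∑ x : ι → β, ∏ i, P i (x i) = 1 := by
  rw [← Fintype.prod_sum]; simp [hP1]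

lemma sum_sqrt_prod_mul_prod (hP : ∀ i b, 0 ≤ P i b) (hQ : ∀ i b, 0 ≤ Q i b) :
    ∑ x : ι → β, √((∏ i, P i (x i)) * ∏ i, Q i (x i)) =
      ∏ i, ∑ b, √(P i b * Q i b) := by
  rw [Fintype.prod_sum]
  refine sum_congr rfl fun x _ => ?_
  rw [← prod_mul_distrib, sqrt_prod _ fun i _ => mul_nonneg (hP i (x i)) (hQ i (x i))]

lemma sum_sqrt_prod_sub_sq_le (hP : ∀ i b, 0 ≤ P i b) (hQ : ∀ i b, 0 ≤ Q i b)
    (hP1 : ∀ i, ∑ b, P i b = 1) (hQ1 : ∀ i, ∑ b, Q i b = 1) :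
    ∑ x : ι → β, (√(∏ i, P i (x i)) - √(∏ i, Q i (x i))) ^ 2
      ≤ ∑ i, ∑ b, (√(P i b) - √(Q i b)) ^ 2 := by
  have hcoord : ∀ i, ∑ b, (√(P i b) - √(Q i b)) ^ 2 = 2 - 2 * ∑ b, √(P i b * Q i b) :=
    fun i => sum_sqrt_sub_sq_eq (hP i) (hQ i) (hP1 i) (hQ1 i)
  have haffinity_le_one : ∀ i, ∑ b, √(P i b * Q i b) ≤ 1 := fun i => by
    have := hcoord i ▸ sum_nonneg fun b _ => sq_nonneg (√(P i b) - √(Q i b))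
    linarith
  have hweierstrass := one_sub_prod_le_sum_one_sub univ
    (fun i _ => sum_nonneg fun b _ => sqrt_nonneg (P i b * Q i b))
    (fun i _ => haffinity_le_one i)
  rw [sum_sqrt_sub_sq_eq (fun x => prod_nonneg fun i _ => hP i (x i))
    (fun x => prod_nonneg fun i _ => hQ i (x i)) (sum_prod_eq_one hP1) (sum_prod_eq_one hQ1),
    sum_sqrt_prod_mul_prod hP hQ, sum_congr rfl fun i _ => hcoord i]
  simp only [sum_sub_distrib, ← mul_sum, sum_const, card_univ, nsmul_eq_mul] at hweierstrass ⊢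
  linarith

end Product

lemma sqrt_sub_sqrt_sq_le {τ a b : ℝ} (hτ : 0 < τ) (ha : τ ≤ a) (hb : τ ≤ b) :
    (√a - √b) ^ 2 ≤ (a - b) ^ 2 / (4 * τ) := by
  have hsa := sq_sqrt (hτ.le.trans ha)
  have hsb := sq_sqrt (hτ.le.trans hb)
  have hsτ := sq_sqrt hτ.le
  have hsum_sq : 4 * τ ≤ (√a + √b) ^ 2 := by
    nlinarith [sqrt_le_sqrt ha, sqrt_le_sqrt hb, sqrt_nonneg τ]
  have hdiff : (√a - √b) * (√a + √b) = a - b := by nlinarith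
  rw [le_div_iff₀ (by positivity), ← hdiff, mul_pow]
  exact mul_le_mul_of_nonneg_left hsum_sq (sq_nonneg _)

def bernoulliPMF (a : ℝ) (b : Bool) : ℝ := if b then a else 1 - a

lemma bernoulliPMF_nonneg {a : ℝ} (h0 : 0 ≤ a) (h1 : a ≤ 1) (b : Bool) :
    0 ≤ bernoulliPMF a b := by
  cases b <;> simp [bernoulliPMF] <;> linarith

lemma sum_bernoulliPMF (a : ℝ) : ∑ b, bernoulliPMF a b = 1 := by
  simp [bernoulliPMF]

lemma sum_sqrt_bernoulliPMF_sub_sq_le {τ a a' : ℝ} (hτ : 0 < τ)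
    (ha : τ ≤ a ∧ a ≤ 1 - τ) (ha' : τ ≤ a' ∧ a' ≤ 1 - τ) :
    ∑ b, (√(bernoulliPMF a b) - √(bernoulliPMF a' b)) ^ 2 ≤ (a - a') ^ 2 / (2 * τ) := by
  have htrue := sqrt_sub_sqrt_sq_le hτ ha.1 ha'.1
  have hfalse := sqrt_sub_sqrt_sq_le (a := 1 - a) (b := 1 - a') hτ (by linarith) (by linarith)
  have hsplit : (a - a') ^ 2 / (2 * τ) =
      (a - a') ^ 2 / (4 * τ) + (1 - a - (1 - a')) ^ 2 / (4 * τ) := by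
    field_simp; ring
  simp only [Fintype.sum_bool, bernoulliPMF, if_true, Bool.false_eq_true, if_false, hsplit]
  exact add_le_add htrue hfalse

theorem stmt2_general {d : ℕ} (τ : ℝ) (p q : Fin d → ℝ) (hτ0 : 0 < τ)
    (hp : ∀ i, τ ≤ p i ∧ p i ≤ 1 - τ) (hq : ∀ i, τ ≤ q i ∧ q i ≤ 1 - τ) :
    tvProd p q ≤ Real.sqrt (∑ i, (p i - q i)^2) / Real.sqrt τ := by
  have hP : ∀ i b, 0 ≤ bernoulliPMF (p i) b := fun i =>
    bernoulliPMF_nonneg (by linarith [hp i]) (by linarith [hp i])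
  have hQ : ∀ i b, 0 ≤ bernoulliPMF (q i) b := fun i =>
    bernoulliPMF_nonneg (by linarith [hq i]) (by linarith [hq i])
  -- `prodPMF p` is definitionally `fun x => ∏ i, bernoulliPMF (p i) (x i)`.
  have hP1 : ∑ x, prodPMF p x = 1 := sum_prod_eq_one fun i => sum_bernoulliPMF (p i)
  have hQ1 : ∑ x, prodPMF q x = 1 := sum_prod_eq_one fun i => sum_bernoulliPMF (q i)
  have hlecam := sq_sum_abs_sub_le (P := prodPMF p) (Q := prodPMF q)
    (fun x => prod_nonneg fun i _ => hP i (x i)) (fun x => prod_nonneg fun i _ => hQ i (x i))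
  rw [sum_add_distrib, hP1, hQ1] at hlecam
  have hsq : tvProd p q ^ 2 ≤ (∑ i, (p i - q i) ^ 2) / τ :=
    calc tvProd p q ^ 2 = (∑ x, |prodPMF p x - prodPMF q x|) ^ 2 / 4 := by rw [tvProd]; ring
      _ ≤ ∑ x, (√(prodPMF p x) - √(prodPMF q x)) ^ 2 := by linarith
      _ ≤ ∑ i, (p i - q i) ^ 2 / (2 * τ) :=
        (sum_sqrt_prod_sub_sq_le hP hQ (fun i => sum_bernoulliPMF _)
          (fun i => sum_bernoulliPMF _)).trans
          (sum_le_sum fun i _ => sum_sqrt_bernoulliPMF_sub_sq_le hτ0 (hp i) (hq i))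
      _ ≤ (∑ i, (p i - q i) ^ 2) / τ := by
        rw [← sum_div]
        exact div_le_div_of_nonneg_left (sum_nonneg fun i _ => sq_nonneg _) hτ0 (by linarith)
  rw [← sqrt_div (sum_nonneg fun i _ => sq_nonneg _)]
  exact (le_abs_self _).trans (abs_le_sqrt hsq)

theorem stmt2 {d : ℕ} (τ : ℝ) (p q : Fin d → ℝ) (hτ0 : 0 < τ) (hτ : τ ≤ 1/2)
    (hp : ∀ i, τ ≤ p i ∧ p i ≤ 1 - τ) (hq : ∀ i, τ ≤ q i ∧ q i ≤ 1 - τ) :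
    tvProd p q ≤ Real.sqrt (∑ i, (p i - q i)^2) / Real.sqrt τ :=
  stmt2_general τ p q hτ0 hp hq
end

section
/- Let X ~ Poisson(mp) and Z = (X − mq)² − X for p, q ∈ [0,1] and m > 0. Then Var(Z) = 4m³p(p−q)² + 2m²p². -/
/-- Poisson probability mass function with mean μ. -/
noncomputable def pois (μ : ℝ) (k : ℕ) : ℝ :=
  Real.exp (-μ) * μ^k / (Nat.factorial k)

/-!
From `(k + 1) P(X = k + 1) = μ P(X = k)` comes the Stein–Chen identity
`E[(X - μ) g(X)] = μ E[g(X + 1) - g(X)]`, which with `Y = X - μ` yields the central moments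
`E[Y] = 0`, `E[Y²] = μ`, `E[Y³] = μ`, `E[Y⁴] = μ + 3μ²` one after the other.
Writing `Z = (X - c)² - X = Y² + (2(μ - c) - 1) Y + (μ - c)² - μ`, we get `E[Z] = (μ - c)²`,
and expanding `(Z - E[Z])²` in powers of `Y` gives `Var Z = 4μ(μ - c)² + 2μ²`;
then put `μ = mp`, `c = mq`.
-/

section Poisson

variable (μ : ℝ)

lemma hasSum_pois : HasSum (pois μ) 1 := by
  have h := (NormedSpace.expSeries_div_hasSum_exp μ).mul_left (Real.exp (-μ))
  rw [← Real.exp_eq_exp_ℝ, ← Real.exp_add, neg_add_cancel, Real.exp_zero] at h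
  exact h.congr_fun fun k => mul_div_assoc _ _ _

lemma pois_succ_mul_succ (k : ℕ) : pois μ (k + 1) * (k + 1) = μ * pois μ k := by
  rw [pois, pois, Nat.factorial_succ, Nat.cast_mul, pow_succ]
  field_simp
  push_cast
  ring

variable {μ}

lemma HasSum.pois_mul_natCast_mul {g : ℕ → ℝ} {s : ℝ}
    (h : HasSum (fun k => pois μ k * g (k + 1)) s) :
    HasSum (fun k => pois μ k * (k * g k)) (μ * s) := by
  have hshift : HasSum (fun k => pois μ (k + 1) * ((k + 1 : ℕ) * g (k + 1))) (μ * s) :=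
    (h.mul_left μ).congr_fun fun k => by
      rw [← mul_assoc, Nat.cast_succ, pois_succ_mul_succ, mul_assoc]
  simpa using (hasSum_nat_add_iff (f := fun k => pois μ k * (k * g k)) 1).mp hshift

lemma HasSum.pois_mul_sub_mul {g : ℕ → ℝ} {s t : ℝ}
    (hs : HasSum (fun k => pois μ k * g (k + 1)) s) (ht : HasSum (fun k => pois μ k * g k) t) :
    HasSum (fun k => pois μ k * (((k : ℝ) - μ) * g k)) (μ * (s - t)) :=
  (mul_sub μ s t) ▸ (hs.pois_mul_natCast_mul.sub (ht.mul_left μ)).congr_fun fun k => by ring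

variable (μ)

lemma hasSum_pois_mul_sub : HasSum (fun k => pois μ k * ((k : ℝ) - μ)) 0 := by
  have h := ((hasSum_pois μ).mul_right 1).pois_mul_sub_mul ((hasSum_pois μ).mul_right 1)
  rw [sub_self, mul_zero] at h
  exact h.congr_fun fun k => by ring

lemma hasSum_pois_mul_sub_pow_two : HasSum (fun k => pois μ k * ((k : ℝ) - μ) ^ 2) μ := by
  have hsucc : HasSum (fun k => pois μ k * (((k + 1 : ℕ) : ℝ) - μ)) 1 := by
    have h := (hasSum_pois_mul_sub μ).add (hasSum_pois μ)
    rw [zero_add] at h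
    exact h.congr_fun fun k => by push_cast; ring
  have h := hsucc.pois_mul_sub_mul (g := fun k => (k : ℝ) - μ) (hasSum_pois_mul_sub μ)
  rw [sub_zero, mul_one] at h
  exact h.congr_fun fun k => by ring

lemma hasSum_pois_mul_sub_pow_three : HasSum (fun k => pois μ k * ((k : ℝ) - μ) ^ 3) μ := by
  have hsucc : HasSum (fun k => pois μ k * (((k + 1 : ℕ) : ℝ) - μ) ^ 2) (μ + 1) := by
    have h := ((hasSum_pois_mul_sub_pow_two μ).add ((hasSum_pois_mul_sub μ).mul_left 2)).add
      (hasSum_pois μ)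
    rw [mul_zero, add_zero] at h
    exact h.congr_fun fun k => by push_cast; ring
  have h := hsucc.pois_mul_sub_mul (g := fun k => ((k : ℝ) - μ) ^ 2)
    (hasSum_pois_mul_sub_pow_two μ)
  rw [add_sub_cancel_left, mul_one] at h
  exact h.congr_fun fun k => by ring

lemma hasSum_pois_mul_sub_pow_four :
    HasSum (fun k => pois μ k * ((k : ℝ) - μ) ^ 4) (μ + 3 * μ ^ 2) := by
  have hsucc :
      HasSum (fun k => pois μ k * (((k + 1 : ℕ) : ℝ) - μ) ^ 3) (μ + 3 * μ + 1) := by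
    have h := (((hasSum_pois_mul_sub_pow_three μ).add
      ((hasSum_pois_mul_sub_pow_two μ).mul_left 3)).add
      ((hasSum_pois_mul_sub μ).mul_left 3)).add (hasSum_pois μ)
    rw [mul_zero, add_zero] at h
    exact h.congr_fun fun k => by push_cast; ring
  have h := hsucc.pois_mul_sub_mul (g := fun k => ((k : ℝ) - μ) ^ 3)
    (hasSum_pois_mul_sub_pow_three μ)
  rw [show μ * (μ + 3 * μ + 1 - μ) = μ + 3 * μ ^ 2 by ring] at h
  exact h.congr_fun fun k => by ring

variable (c : ℝ)

lemma hasSum_pois_mul_sq_sub_sub :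
    HasSum (fun k => pois μ k * (((k : ℝ) - c) ^ 2 - k)) ((μ - c) ^ 2) := by
  have h := ((hasSum_pois_mul_sub_pow_two μ).add
    ((hasSum_pois_mul_sub μ).mul_left (2 * (μ - c) - 1))).add
    ((hasSum_pois μ).mul_left ((μ - c) ^ 2 - μ))
  rw [show μ + (2 * (μ - c) - 1) * 0 + ((μ - c) ^ 2 - μ) * 1 = (μ - c) ^ 2 by ring] at h
  exact h.congr_fun fun k => by ring

lemma hasSum_pois_mul_sq_sub_sub_sub_sq :
    HasSum (fun k => pois μ k * ((((k : ℝ) - c) ^ 2 - k) - (μ - c) ^ 2) ^ 2)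
      (4 * μ * (μ - c) ^ 2 + 2 * μ ^ 2) := by
  set b := 2 * (μ - c) - 1
  have h := ((((hasSum_pois_mul_sub_pow_four μ).add
    ((hasSum_pois_mul_sub_pow_three μ).mul_left (2 * b))).add
    ((hasSum_pois_mul_sub_pow_two μ).mul_left (b ^ 2 - 2 * μ))).add
    ((hasSum_pois_mul_sub μ).mul_left (-2 * b * μ))).add
    ((hasSum_pois μ).mul_left (μ ^ 2))
  rw [show μ + 3 * μ ^ 2 + 2 * b * μ + (b ^ 2 - 2 * μ) * μ + -2 * b * μ * 0 + μ ^ 2 * 1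
    = 4 * μ * (μ - c) ^ 2 + 2 * μ ^ 2 by ring] at h
  exact h.congr_fun fun k => by ring

end Poisson

theorem stmt5_general (m p q : ℝ) :
    ∑' k : ℕ, pois (m * p) k *
        ((((k : ℝ) - m * q)^2 - k) -
          ∑' j : ℕ, pois (m * p) j * (((j : ℝ) - m * q)^2 - j))^2
      = 4 * m^3 * p * (p - q)^2 + 2 * m^2 * p^2 := by
  rw [(hasSum_pois_mul_sq_sub_sub (m * p) (m * q)).tsum_eq,
    (hasSum_pois_mul_sq_sub_sub_sub_sq (m * p) (m * q)).tsum_eq]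
  ring

theorem stmt5 (m p q : ℝ) (hm : 0 < m) (hp : p ∈ Set.Icc (0:ℝ) 1) (hq : q ∈ Set.Icc (0:ℝ) 1) :
    ∑' k : ℕ, pois (m * p) k *
        ((((k : ℝ) - m * q)^2 - k) -
          ∑' j : ℕ, pois (m * p) j * (((j : ℝ) - m * q)^2 - j))^2
      = 4 * m^3 * p * (p - q)^2 + 2 * m^2 * p^2 :=
  stmt5_general m p q
end

section
/- Let S, T ⊆ [d], and let p_S ∈ [0,1]^d be defined by p_S[i] = 2ε/d if i ∈ S and ε/d otherwise (similarly p_T), for 0 < ε ≤ 1 and d ≥ 10. Then the total variation distance between the product distributions Ber(p_S) and Ber(p_T) satisfies d_TV(Ber(p_S), Ber(p_T)) ≥ 1 − (|S∖T|·ε/d + 1/(1 + 2|S∖T|·ε/d)). -/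
lemma sum_prodPMF_filter {d : ℕ} (p : Fin d → ℝ) (A : Finset (Fin d)) :
    ∑ x ∈ Finset.univ.filter (fun x : Fin d → Bool => ∀ i ∈ A, x i = false),
      prodPMF p x = ∏ i ∈ A, (1 - p i) := by
  set h : Fin d → Bool → ℝ := fun i b => if b then (if i ∈ A then 0 else p i) else 1 - p i
    with hh
  have key : ∏ i, ∑ b : Bool, h i b = ∑ x : Fin d → Bool, ∏ i, h i (x i) := by
    rw [Finset.prod_univ_sum (fun _ => (Finset.univ : Finset Bool)) h,
      Fintype.piFinset_univ]
  have split := Finset.sum_filter_add_sum_filter_not Finset.univ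
    (fun x : Fin d → Bool => ∀ i ∈ A, x i = false) (fun x => ∏ i, h i (x i))
  have hzero : ∑ x ∈ Finset.univ.filter
      (fun x : Fin d → Bool => ¬ ∀ i ∈ A, x i = false), ∏ i, h i (x i) = 0 := by
    apply Finset.sum_eq_zero
    intro x hx
    simp only [Finset.mem_filter] at hx
    push_neg at hx
    obtain ⟨i, hiA, hi⟩ := hx.2
    have : x i = true := by simpa using hi
    exact Finset.prod_eq_zero (Finset.mem_univ i) (by simp [hh, this, hiA])
  have hagree : ∑ x ∈ Finset.univ.filter
      (fun x : Fin d → Bool => ∀ i ∈ A, x i = false), ∏ i, h i (x i)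
      = ∑ x ∈ Finset.univ.filter
      (fun x : Fin d → Bool => ∀ i ∈ A, x i = false), prodPMF p x := by
    apply Finset.sum_congr rfl
    intro x hx
    simp only [Finset.mem_filter] at hx
    unfold prodPMF
    apply Finset.prod_congr rfl
    intro i _
    cases hxi : x i with
    | false => simp [hh, hxi]
    | true =>
      have hiA : i ∉ A := fun h' => by simp [hx.2 i h'] at hxi
      simp [hh, hxi, hiA]
  have hsumb : ∀ i, ∑ b : Bool, h i b = if i ∈ A then 1 - p i else 1 := by
    intro i
    rw [Fintype.sum_bool]
    by_cases hiA : i ∈ A <;> simp [hh, hiA]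
  calc ∑ x ∈ Finset.univ.filter (fun x : Fin d → Bool => ∀ i ∈ A, x i = false),
        prodPMF p x
      = ∑ x ∈ Finset.univ.filter
          (fun x : Fin d → Bool => ∀ i ∈ A, x i = false), ∏ i, h i (x i) := hagree.symm
    _ = ∑ x : Fin d → Bool, ∏ i, h i (x i) := by
          rw [← split, hzero, add_zero]
    _ = ∏ i, ∑ b : Bool, h i b := key.symm
    _ = ∏ i, (if i ∈ A then 1 - p i else 1) := by
          exact Finset.prod_congr rfl fun i _ => hsumb i
    _ = ∏ i ∈ A, (1 - p i) := by
          rw [Finset.prod_ite_mem, Finset.univ_inter]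

lemma sum_prodPMF {d : ℕ} (p : Fin d → ℝ) :
    ∑ x : Fin d → Bool, prodPMF p x = 1 := by
  have := sum_prodPMF_filter p ∅
  simpa using this

theorem stmt15 {d : ℕ} (hd : 10 ≤ d) (ε : ℝ) (hε : 0 < ε) (hε1 : ε ≤ 1)
    (S T : Finset (Fin d)) :
    let pS : Fin d → ℝ := fun i => if i ∈ S then 2 * ε / d else ε / d
    let pT : Fin d → ℝ := fun i => if i ∈ T then 2 * ε / d else ε / d
    1 - (((S \ T).card : ℝ) * ε / d + 1 / (1 + 2 * ((S \ T).card : ℝ) * ε / d))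
      ≤ tvProd pS pT := by
  intro pS pT
  set A : Finset (Fin d) := S \ T with hA
  set k : ℕ := A.card with hk
  have hd0 : (0 : ℝ) < d := by positivity
  have hxd : ε / d ≤ 1 / 10 := by
    rw [div_le_div_iff₀ hd0 (by norm_num)]
    calc ε * 10 ≤ 1 * 10 := by nlinarith
    _ ≤ 1 * d := by
        have : (10 : ℝ) ≤ d := by exact_mod_cast hd
        nlinarith
  have hx0 : 0 < ε / d := by positivity
  -- probabilities of the event
  set E : Finset (Fin d → Bool) :=
    Finset.univ.filter (fun x : Fin d → Bool => ∀ i ∈ A, x i = false) with hE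
  have hES : ∑ x ∈ E, prodPMF pS x = (1 - 2 * ε / d) ^ k := by
    rw [hE, sum_prodPMF_filter pS A]
    have : ∏ i ∈ A, (1 - pS i) = ∏ _i ∈ A, (1 - 2 * ε / (d : ℝ)) :=
      Finset.prod_congr rfl (fun i hi => by
        have : i ∈ S := (Finset.mem_sdiff.mp hi).1
        simp [pS, this])
    rw [this, Finset.prod_const, hk]
  have hET : ∑ x ∈ E, prodPMF pT x = (1 - ε / d) ^ k := by
    rw [hE, sum_prodPMF_filter pT A]
    have : ∏ i ∈ A, (1 - pT i) = ∏ _i ∈ A, (1 - ε / (d : ℝ)) :=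
      Finset.prod_congr rfl (fun i hi => by
        have : i ∉ T := (Finset.mem_sdiff.mp hi).2
        simp [pT, this])
    rw [this, Finset.prod_const, hk]
  -- TV lower bound via the event E
  have htv : (1 - ε / d) ^ k - (1 - 2 * ε / d) ^ k ≤ tvProd pS pT := by
    have hsplit := Finset.sum_filter_add_sum_filter_not Finset.univ
      (fun x : Fin d → Bool => ∀ i ∈ A, x i = false)
      (fun x => |prodPMF pS x - prodPMF pT x|)
    have h1 : ∑ x ∈ E, (prodPMF pT x - prodPMF pS x) ≤
        ∑ x ∈ E, |prodPMF pS x - prodPMF pT x| := by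
      apply Finset.sum_le_sum
      intro x _
      rw [abs_sub_comm]
      exact le_abs_self _
    set Ec : Finset (Fin d → Bool) :=
      Finset.univ.filter (fun x : Fin d → Bool => ¬ ∀ i ∈ A, x i = false) with hEc
    have h2 : ∑ x ∈ Ec, (prodPMF pS x - prodPMF pT x) ≤
        ∑ x ∈ Ec, |prodPMF pS x - prodPMF pT x| := by
      apply Finset.sum_le_sum
      intro x _
      exact le_abs_self _
    have hcS : ∑ x ∈ Ec, prodPMF pS x = 1 - ∑ x ∈ E, prodPMF pS x := by
      have := Finset.sum_filter_add_sum_filter_not Finset.univ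
        (fun x : Fin d → Bool => ∀ i ∈ A, x i = false) (prodPMF pS)
      rw [sum_prodPMF pS] at this
      rw [← hE, ← hEc] at this
      linarith
    have hcT : ∑ x ∈ Ec, prodPMF pT x = 1 - ∑ x ∈ E, prodPMF pT x := by
      have := Finset.sum_filter_add_sum_filter_not Finset.univ
        (fun x : Fin d → Bool => ∀ i ∈ A, x i = false) (prodPMF pT)
      rw [sum_prodPMF pT] at this
      rw [← hE, ← hEc] at this
      linarith
    have hEsum : ∑ x ∈ E, (prodPMF pT x - prodPMF pS x)
        = (1 - ε / d) ^ k - (1 - 2 * ε / d) ^ k := by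
      rw [Finset.sum_sub_distrib, hES, hET]
    have hEcsum : ∑ x ∈ Ec, (prodPMF pS x - prodPMF pT x)
        = (1 - ε / d) ^ k - (1 - 2 * ε / d) ^ k := by
      rw [Finset.sum_sub_distrib, hcS, hcT, hES, hET]
      ring
    unfold tvProd
    rw [← hE] at hsplit
    rw [← hsplit]
    rw [hEsum] at h1
    rw [hEcsum] at h2
    linarith
  refine le_trans ?_ htv
  -- the numeric inequality
  have hbern1 : 1 - (k : ℝ) * ε / d ≤ (1 - ε / d) ^ k := by
    have := one_add_mul_le_pow (a := -(ε / d)) (by linarith) k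
    have h' : 1 + (k : ℝ) * (-(ε / d)) = 1 - (k : ℝ) * ε / d := by ring
    rw [h'] at this
    have h'' : (1 : ℝ) + -(ε / d) = 1 - ε / d := by ring
    rw [h''] at this
    exact this
  have hbern2 : (1 - 2 * ε / d) ^ k ≤ 1 / (1 + 2 * (k : ℝ) * ε / d) := by
    have hy : 2 * ε / d ≤ 1 / 5 := by
      rw [mul_div_assoc]
      linarith
    have hy0 : 0 < 2 * ε / d := by positivity
    have hpos : 0 < 1 + 2 * (k : ℝ) * ε / d := by positivity
    rw [le_div_iff₀ hpos]
    have hb : 1 + 2 * (k : ℝ) * ε / d ≤ (1 + 2 * ε / d) ^ k := by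
      have := one_add_mul_le_pow (a := 2 * ε / d) (by linarith) k
      calc 1 + 2 * (k : ℝ) * ε / d = 1 + (k : ℝ) * (2 * ε / d) := by ring
        _ ≤ (1 + 2 * ε / d) ^ k := this
    have hnn : (0 : ℝ) ≤ (1 - 2 * ε / d) ^ k := by
      apply pow_nonneg; linarith
    calc (1 - 2 * ε / d) ^ k * (1 + 2 * (k : ℝ) * ε / d)
        ≤ (1 - 2 * ε / d) ^ k * (1 + 2 * ε / d) ^ k := by
          exact mul_le_mul_of_nonneg_left hb hnn
      _ = ((1 - 2 * ε / d) * (1 + 2 * ε / d)) ^ k := by rw [← mul_pow]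
      _ = (1 - (2 * ε / d) ^ 2) ^ k := by ring_nf
      _ ≤ 1 := by
          apply pow_le_one₀
          · nlinarith
          · nlinarith
  linarith
end
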